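/- For any α ∈ (0,1/2], setting λ = (log 2)/(2 log(1/α)), the Jensen–Shannon divergence satisfies JS_α(P‖Q) ≤ α·√2·H_{1-λ}(P‖Q) for all probability distributions P, Q on a finite set. -/

import Mathlib

open Real BigOperators

/-- Kullback–Leibler divergence between finitely supported distributions. -/
noncomputable def KLdiv {α : Type*} [Fintype α] (P Q : α → ℝ) : ℝ :=
  ∑ x, P x * Real.log (P x / Q x)

/-- Jensen–Shannon divergence with weight `p`. -/
noncomputable def JSdiv {α : Type*} [Fintype α] (p : ℝ) (P Q : α → ℝ) : ℝ :=
  p * KLdiv P (fun x => p * P x + (1 - p) * Q x) +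
    (1 - p) * KLdiv Q (fun x => p * P x + (1 - p) * Q x)

/-- Hellinger divergence of order `s`. -/
noncomputable def Hellinger {α : Type*} [Fintype α] (s : ℝ) (P Q : α → ℝ) : ℝ :=
  (1 / (s - 1)) * ((∑ x, P x ^ s * Q x ^ (1 - s)) - 1)

/-!
Both divergences are f-divergences, `D_f(P‖Q) = ∑ Q x * f (P x / Q x)`, with JS generator
`f t = α t log t - (α t + 1 - α) log (α t + 1 - α)` and, for `H_{1-λ}`, the generator
`((1-λ) t + λ - t^(1-λ)) / λ` (the affine part sums to zero). So it suffices to compare generators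
on `[0, ∞)`. Their difference `φ` vanishes together with `φ'` at `t = 1`, and it is convex:
since `α^λ = 1/√2`, the inequality `φ'' ≥ 0` is the weighted AM-GM inequality
`(α t)^λ ≤ λ α t + 1 - λ` in disguise. Summands with `Q x = 0` reduce to
`λ log (1/α) = log √2 ≤ √2 - 1`.
-/

open Real Set Finset

lemma one_sub_mul_rpow_le {a l s : ℝ} (ha0 : 0 ≤ a) (ha1 : a ≤ 1) (hl0 : 0 ≤ l) (hl2 : l ≤ 1 / 2)
    (hs : 0 ≤ s) : (1 - a) * s ^ l ≤ (1 - l) * (s + 1 - a) := by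
  have amgm : s ^ l ≤ l * s + (1 - l) := by
    simpa using geom_mean_le_arith_mean2_weighted hl0 (by linarith) hs zero_le_one (by ring)
  calc (1 - a) * s ^ l ≤ (1 - a) * (l * s + (1 - l)) := by gcongr
    _ ≤ (1 - l) * (s + 1 - a) := by nlinarith [mul_nonneg ha0 hl0]

noncomputable def jsGenerator (a t : ℝ) : ℝ :=
  a * (t * log t) - (a * t + 1 - a) * log (a * t + 1 - a)

lemma continuous_jsGenerator (a : ℝ) : Continuous (jsGenerator a) :=
  (continuous_mul_log.const_mul a).sub (continuous_mul_log.comp (by fun_prop))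

lemma hasDerivAt_jsGenerator {a t : ℝ} (ht : t ≠ 0) (hm : a * t + 1 - a ≠ 0) :
    HasDerivAt (jsGenerator a) (a * (log t - log (a * t + 1 - a))) t := by
  have hu : HasDerivAt (fun t => a * t + 1 - a) a t := by
    simpa using ((hasDerivAt_id' t).const_mul a).add_const 1 |>.sub_const a
  have h : HasDerivAt (fun t => a * (t * log t) - (a * t + 1 - a) * log (a * t + 1 - a))
      (a * (log t + 1) - (a * log (a * t + 1 - a) + (a * t + 1 - a) * (a / (a * t + 1 - a)))) t :=
    ((hasDerivAt_mul_log ht).const_mul a).sub (hu.mul (hu.log hm))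
  exact h.congr_deriv (by field_simp; ring)

lemma hasDerivAt_log_sub_log_affine {a t : ℝ} (ht : t ≠ 0) (hm : a * t + 1 - a ≠ 0) :
    HasDerivAt (fun t => a * (log t - log (a * t + 1 - a)))
      (a * (t⁻¹ - a / (a * t + 1 - a))) t := by
  have hu : HasDerivAt (fun t => a * t + 1 - a) a t := by
    simpa using ((hasDerivAt_id' t).const_mul a).add_const 1 |>.sub_const a
  exact ((hasDerivAt_log ht).sub (hu.log hm)).const_mul a

lemma mul_inv_sub_div_le_rpow {a l t : ℝ} (ha0 : 0 < a) (ha1 : a ≤ 1) (hl0 : 0 ≤ l)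
    (hl2 : l ≤ 1 / 2) (hid : a ^ l * √2 = 1) (ht : 0 < t) :
    a * (t⁻¹ - a / (a * t + 1 - a)) ≤ a * √2 * (1 - l) * t ^ (-l - 1) := by
  have hm : 0 < a * t + 1 - a := by nlinarith
  have key : (1 - a) * t ^ l ≤ √2 * (1 - l) * (a * t + 1 - a) := by
    have h := one_sub_mul_rpow_le ha0.le ha1 hl0 hl2 (mul_nonneg ha0.le ht.le)
    have ht' : t ^ l = √2 * (a * t) ^ l := by
      rw [mul_rpow ha0.le ht.le]; linear_combination (-t ^ l) * hid
    rw [ht']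
    nlinarith [sqrt_nonneg 2]
  calc a * (t⁻¹ - a / (a * t + 1 - a)) = a * (1 - a) / (t * (a * t + 1 - a)) := by
        field_simp; ring
    _ ≤ a * (√2 * (1 - l) * (a * t + 1 - a) / t ^ l) / (t * (a * t + 1 - a)) := by
        gcongr
        rw [le_div_iff₀ (by positivity)]
        exact key
    _ = a * √2 * (1 - l) * t ^ (-l - 1) := by
        rw [rpow_sub_one ht.ne', rpow_neg ht.le]
        field_simp

theorem jsGenerator_le {a l t : ℝ} (ha0 : 0 < a) (ha1 : a ≤ 1) (hl0 : 0 < l) (hl2 : l ≤ 1 / 2)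
    (hid : a ^ l * √2 = 1) (ht : 0 ≤ t) :
    jsGenerator a t ≤ a * √2 * (((1 - l) * t + l - t ^ (1 - l)) / l) := by
  set φ : ℝ → ℝ := fun t => a * √2 * (((1 - l) * t + l - t ^ (1 - l)) / l) - jsGenerator a t
  set φ' : ℝ → ℝ := fun t =>
    a * √2 * ((1 - l) * (1 - t ^ (-l)) / l) - a * (log t - log (a * t + 1 - a))
  set φ'' : ℝ → ℝ := fun t => a * √2 * (1 - l) * t ^ (-l - 1) - a * (t⁻¹ - a / (a * t + 1 - a))
  have hm : ∀ t : ℝ, 0 < t → a * t + 1 - a ≠ 0 := fun t ht => by nlinarith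
  have hφ' : ∀ t : ℝ, 0 < t → HasDerivAt φ (φ' t) t := fun t ht => by
    have h := (((((hasDerivAt_id' t).const_mul (1 - l)).add_const l).sub
      (hasDerivAt_rpow_const (p := 1 - l) (Or.inl ht.ne'))).div_const l).const_mul (a * √2) |>.sub
      (hasDerivAt_jsGenerator ht.ne' (hm t ht))
    refine h.congr_deriv ?_
    simp only [φ', show 1 - l - 1 = -l by ring]
    ring
  have hφ'' : ∀ t : ℝ, 0 < t → HasDerivAt φ' (φ'' t) t := fun t ht => by
    have h := ((((hasDerivAt_rpow_const (p := -l) (Or.inl ht.ne')).const_sub 1).const_mul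
      (1 - l)).div_const l).const_mul (a * √2) |>.sub
      (hasDerivAt_log_sub_log_affine ht.ne' (hm t ht))
    refine h.congr_deriv ?_
    simp only [φ'']
    field_simp
  have hcont : Continuous φ := by
    have := continuous_jsGenerator a
    have := continuous_rpow_const (q := 1 - l) (by linarith)
    fun_prop
  have hconvex : ConvexOn ℝ (Ici 0) φ := by
    refine convexOn_of_hasDerivWithinAt2_nonneg (f' := φ') (f'' := φ'') (convex_Ici 0)
      hcont.continuousOn ?_ ?_ ?_ <;> simp only [interior_Ici]
    · exact fun t ht => (hφ' t ht).hasDerivWithinAt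
    · exact fun t ht => (hφ'' t ht).hasDerivWithinAt
    · exact fun t ht => sub_nonneg.2 (mul_inv_sub_div_le_rpow ha0 ha1 hl0.le hl2 hid ht)
  have hmin : IsMinOn φ (Ici 0) 1 := by
    refine hconvex.isMinOn_of_rightDeriv_eq_zero (by simp) ?_
    rw [(hφ' 1 one_pos).hasDerivWithinAt.derivWithin (uniqueDiffWithinAt_Ioi 1)]
    simp [φ']
  have hφ1 : φ 1 = 0 := by simp [φ, jsGenerator]
  have h := isMinOn_iff.1 hmin t (mem_Ici.2 ht)
  rw [hφ1] at h
  exact sub_nonneg.1 h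

lemma mul_log_div_eq {x y : ℝ} (hy : y ≠ 0) : x * log (x / y) = x * log x - x * log y := by
  rcases eq_or_ne x 0 with rfl | hx
  · simp
  · rw [log_div hx hy]; ring

lemma jsSummand_eq_mul_jsGenerator {a p q : ℝ} (hq : 0 < q) (hm : a * p + (1 - a) * q ≠ 0) :
    a * (p * log (p / (a * p + (1 - a) * q))) + (1 - a) * (q * log (q / (a * p + (1 - a) * q)))
      = q * jsGenerator a (p / q) := by
  set m := a * p + (1 - a) * q with hm_def
  have hmq : a * (p / q) + 1 - a = m / q := by rw [hm_def]; field_simp; ring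
  calc _ = a * (p * log p) + (1 - a) * (q * log q) - m * log m := by
        rw [mul_log_div_eq hm, mul_log_div_eq hm]; ring
    _ = a * (p * log (p / q)) - m * log (m / q) := by
        rw [mul_log_div_eq hq.ne', mul_log_div_eq hq.ne']; ring
    _ = q * jsGenerator a (p / q) := by
        rw [jsGenerator, hmq]; field_simp

lemma neg_mul_log_le_sqrt_two_mul {a l : ℝ} (ha0 : 0 < a) (hl2 : l ≤ 1 / 2) (hid : a ^ l * √2 = 1) :
    -(l * log a) ≤ √2 * (1 - l) := by
  have hlog : l * log a + log √2 = 0 := by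
    rw [← log_rpow ha0, ← log_mul (by positivity) (by positivity), hid, log_one]
  have hsqrt := log_le_sub_one_of_pos (show (0 : ℝ) < √2 by positivity)
  have hsqrt2 : √2 ≤ 2 := by rw [sqrt_le_left (by norm_num)]; norm_num
  nlinarith [mul_nonneg (sqrt_nonneg 2) (sub_nonneg.2 hl2)]

theorem jsSummand_le {a l p q : ℝ} (ha0 : 0 < a) (ha1 : a < 1) (hl0 : 0 < l) (hl2 : l ≤ 1 / 2)
    (hid : a ^ l * √2 = 1) (hp : 0 ≤ p) (hq : 0 ≤ q) :
    a * (p * log (p / (a * p + (1 - a) * q))) + (1 - a) * (q * log (q / (a * p + (1 - a) * q)))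
      ≤ a * √2 * (((1 - l) * p + l * q - p ^ (1 - l) * q ^ l) / l) := by
  rcases hq.eq_or_lt with rfl | hq
  · rcases hp.eq_or_lt with rfl | hp
    · simp [zero_rpow hl0.ne']
    have hpa : p / (a * p) = a⁻¹ := by field_simp
    simp only [mul_zero, add_zero, zero_mul, sub_zero, zero_rpow hl0.ne', hpa, log_inv]
    calc a * (p * -log a) = a * p * -(l * log a) / l := by field_simp
      _ ≤ a * p * (√2 * (1 - l)) / l := by gcongr; exact neg_mul_log_le_sqrt_two_mul ha0 hl2 hid
      _ = _ := by ring
  · have hm : 0 < a * p + (1 - a) * q := by nlinarith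
    have hrpow : (p / q) ^ (1 - l) = p ^ (1 - l) * q ^ l / q := by
      rw [div_rpow hp hq.le, rpow_sub hq, rpow_one]; field_simp
    calc _ = q * jsGenerator a (p / q) := jsSummand_eq_mul_jsGenerator hq hm.ne'
      _ ≤ q * (a * √2 * (((1 - l) * (p / q) + l - (p / q) ^ (1 - l)) / l)) := by
          gcongr
          exact jsGenerator_le ha0 ha1.le hl0 hl2 hid (div_nonneg hp hq.le)
      _ = _ := by rw [hrpow]; field_simp

lemma rpow_mul_sqrt_two_eq_one {a : ℝ} (ha0 : 0 < a) (ha1 : a < 1) :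
    a ^ (log 2 / (2 * log (1 / a))) * √2 = 1 := by
  have hlog : log a ≠ 0 := (log_neg ha0 ha1).ne
  refine eq_one_of_pos_of_log_eq_zero (by positivity) ?_
  rw [log_mul (by positivity) (by positivity), log_rpow ha0, log_sqrt zero_le_two, one_div,
    log_inv]
  field_simp
  ring

lemma JSdiv_eq_sum {X : Type*} [Fintype X] (a : ℝ) (P Q : X → ℝ) :
    JSdiv a P Q = ∑ x, (a * (P x * log (P x / (a * P x + (1 - a) * Q x)))
      + (1 - a) * (Q x * log (Q x / (a * P x + (1 - a) * Q x)))) := by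
  rw [JSdiv, KLdiv, KLdiv, mul_sum, mul_sum, ← sum_add_distrib]

lemma Hellinger_one_sub_eq_sum {X : Type*} [Fintype X] {P Q : X → ℝ} {l : ℝ} (hl : l ≠ 0)
    (hP1 : ∑ x, P x = 1) (hQ1 : ∑ x, Q x = 1) :
    Hellinger (1 - l) P Q = ∑ x, ((1 - l) * P x + l * Q x - P x ^ (1 - l) * Q x ^ l) / l := by
  rw [Hellinger, sub_sub_cancel, sub_sub_cancel_left, ← sum_div, sum_sub_distrib,
    sum_add_distrib, ← mul_sum, ← mul_sum, hP1, hQ1]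
  field_simp
  ring

/-- For `α ∈ (0,1/2]` and `λ = log 2/(2 log(1/α))`,
`JS_α(P‖Q) ≤ α·√2·H_{1-λ}(P‖Q)`. -/
theorem stmt_9 {X : Type*} [Fintype X] (P Q : X → ℝ) (α l : ℝ)
    (hP0 : ∀ x, 0 ≤ P x) (hQ0 : ∀ x, 0 ≤ Q x)
    (hP1 : ∑ x, P x = 1) (hQ1 : ∑ x, Q x = 1)
    (hα : α ∈ Set.Ioc (0:ℝ) (1/2))
    (hl : l = Real.log 2 / (2 * Real.log (1 / α))) :
    JSdiv α P Q ≤ α * Real.sqrt 2 * Hellinger (1 - l) P Q := by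
  obtain ⟨hα0, hα2⟩ := hα
  have hlog : log 2 ≤ log (1 / α) :=
    log_le_log zero_lt_two (by rw [le_div_iff₀ hα0]; linarith)
  have hl0 : 0 < l := by
    rw [hl]; exact div_pos (log_pos one_lt_two) (by linarith [log_pos one_lt_two])
  have hl2 : l ≤ 1 / 2 := by
    rw [hl, div_le_iff₀ (by linarith [log_pos one_lt_two])]; linarith
  have hid : α ^ l * √2 = 1 := hl ▸ rpow_mul_sqrt_two_eq_one hα0 (by linarith)
  rw [JSdiv_eq_sum, Hellinger_one_sub_eq_sum hl0.ne' hP1 hQ1, mul_sum]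
  exact sum_le_sum fun x _ => jsSummand_le hα0 (by linarith) hl0 hl2 hid (hP0 x) (hQ0 x)
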